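/- arXiv:0805.1759 — 5 statements merged into one kernel-verified Lean document; each statement's English description precedes it below -/
import Mathlib

section
/- The greedy first-price allocation is revenue-maximizing: the click vector c^G produced by the multi-slot greedy first-price mechanism is schedule-feasible, satisfies c^G_i ≤ B_i/b_i for every i, and achieves Σ_i b_i·c^G_i = max{ Σ_i b_i·c_i : c_i ≥ 0, c_i ≤ B_i/b_i for all i, and (c_1, …, c_n) is schedule-feasible }. -/
/-- A click vector `c` is schedule-feasible for slot rates
`D 0 > D 1 > … > D (n-1) ≥ 0` if for every `ℓ` the sum of the `ℓ` largest
entries of `c` is at most `D 0 + … + D (ℓ-1)`; equivalently, the sum of `c`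
over every `ℓ`-element subset is at most the sum of the top `ℓ` slot rates. -/
def ScheduleFeasible (n : ℕ) (D c : Fin n → ℝ) : Prop :=
  ∀ T : Finset (Fin n),
    ∑ i ∈ T, c i ≤ ∑ j ∈ Finset.univ.filter (fun j : Fin n => (j : ℕ) < T.card), D j

/-!
Call a set `T` of bidders tight for a feasible click vector if it exhausts its constraint, i.e.
its clicks add up to the total rate of the top `#T` slots. As `k ↦ D 0 + ⋯ + D (k-1)` is concave,
tight sets are closed under union. If greedy leaves bidder `i` below the budget cap `B i / b i`,
some tight set contains `i` and otherwise only higher bidders, for else `i` could have been given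
more clicks. Taking the union of these sets, every prefix of the bidders splits into a tight set
and bidders at their caps, so the greedy vector has the largest click total on every prefix among
all feasible vectors within the caps. Since the bids decrease, revenue is a nonnegative
combination of prefix totals (Abel summation).
-/

open Finset

namespace GreedyFirstPrice

variable {n : ℕ}

def zeroExtend (f : Fin n → ℝ) (k : ℕ) : ℝ :=
  if h : k < n then f ⟨k, h⟩ else 0

@[simp]
lemma zeroExtend_val (f : Fin n → ℝ) (i : Fin n) : zeroExtend f i = f i := by
  simp [zeroExtend]

lemma zeroExtend_nonneg {f : Fin n → ℝ} (hf0 : 0 ≤ f) : 0 ≤ zeroExtend f := by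
  intro k
  unfold zeroExtend
  split_ifs
  exacts [hf0 _, le_rfl]

lemma zeroExtend_antitone {f : Fin n → ℝ} (hf : Antitone f) (hf0 : 0 ≤ f) :
    Antitone (zeroExtend f) := by
  intro k l hkl
  unfold zeroExtend
  by_cases hl : l < n
  · rw [dif_pos hl, dif_pos (hkl.trans_lt hl)]
    exact hf (Fin.mk_le_mk.mpr hkl)
  · rw [dif_neg hl]
    exact zeroExtend_nonneg hf0 k

lemma sum_filter_val_lt_eq_sum_range (f : Fin n → ℝ) (m : ℕ) :
    ∑ j ∈ univ.filter (fun j : Fin n => (j : ℕ) < m), f j = ∑ k ∈ range m, zeroExtend f k := by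
  have hsupp : ∀ k ∈ range m, zeroExtend f k ≠ 0 → k < n := fun k _ hk => by
    by_contra h
    exact hk (dif_neg h)
  calc ∑ j ∈ univ.filter (fun j : Fin n => (j : ℕ) < m), f j
      = ∑ j : Fin n, if (j : ℕ) < m then zeroExtend f j else 0 := by simp [sum_filter]
    _ = ∑ k ∈ (range n).filter (· < m), zeroExtend f k := by
      rw [Fin.sum_univ_eq_sum_range (fun k => if k < m then zeroExtend f k else 0), sum_filter]
    _ = ∑ k ∈ (range m).filter (· < n), zeroExtend f k := by
      congr 1; ext; simp only [mem_filter, mem_range]; omega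
    _ = ∑ k ∈ range m, zeroExtend f k := sum_filter_of_ne hsupp

def topSum (D : Fin n → ℝ) (k : ℕ) : ℝ :=
  ∑ j ∈ univ.filter (fun j : Fin n => (j : ℕ) < k), D j

lemma scheduleFeasible_iff {D c : Fin n → ℝ} :
    ScheduleFeasible n D c ↔ ∀ T : Finset (Fin n), ∑ i ∈ T, c i ≤ topSum D #T :=
  Iff.rfl

lemma topSum_eq_sum_range (D : Fin n → ℝ) (k : ℕ) :
    topSum D k = ∑ r ∈ range k, zeroExtend D r :=
  sum_filter_val_lt_eq_sum_range D k

lemma topSum_zero (D : Fin n → ℝ) : topSum D 0 = 0 := by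
  simp [topSum_eq_sum_range]

lemma topSum_mono {D : Fin n → ℝ} (hD0 : 0 ≤ D) : Monotone (topSum D) := by
  intro k l hkl
  simp only [topSum_eq_sum_range]
  exact sum_le_sum_of_subset_of_nonneg (range_mono hkl) fun r _ _ => zeroExtend_nonneg hD0 r

lemma topSum_add_add_le {D : Fin n → ℝ} (hD : Antitone D) (hD0 : 0 ≤ D) {q t : ℕ}
    (hqt : q ≤ t) (r : ℕ) : topSum D (t + r) + topSum D q ≤ topSum D (q + r) + topSum D t := by
  have hinc : ∑ i ∈ range r, zeroExtend D (t + i) ≤ ∑ i ∈ range r, zeroExtend D (q + i) :=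
    sum_le_sum fun i _ => zeroExtend_antitone hD hD0 (by omega)
  simp only [topSum_eq_sum_range, sum_range_add]
  linarith

lemma _root_.ScheduleFeasible.mono {D c c' : Fin n → ℝ} (hc' : ScheduleFeasible n D c')
    (h : c ≤ c') : ScheduleFeasible n D c :=
  fun T => (sum_le_sum fun j _ => h j).trans (hc' T)

lemma scheduleFeasible_zero {D : Fin n → ℝ} (hD0 : 0 ≤ D) : ScheduleFeasible n D 0 := by
  rw [scheduleFeasible_iff]
  intro T
  simpa [topSum_zero] using topSum_mono hD0 (Nat.zero_le #T)

lemma isClosed_setOf_scheduleFeasible (D : Fin n → ℝ) {f : ℝ → Fin n → ℝ} (hf : Continuous f) :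
    IsClosed {c | ScheduleFeasible n D (f c)} := by
  simp only [scheduleFeasible_iff, Set.ofPred_forall]
  exact isClosed_iInter fun T =>
    isClosed_le (continuous_finsetSum T fun j _ => (continuous_apply j).comp hf) continuous_const

lemma sum_add_single_apply (y : Fin n → ℝ) (i : Fin n) (δ : ℝ) (T : Finset (Fin n)) :
    ∑ j ∈ T, (y + (Pi.single i δ : Fin n → ℝ)) j = ∑ j ∈ T, y j + if i ∈ T then δ else 0 := by
  simp only [Pi.add_apply, sum_add_distrib, sum_pi_single']

lemma exists_pos_scheduleFeasible_add_single {D y : Fin n → ℝ} (hy : ScheduleFeasible n D y)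
    {i : Fin n} (hslack : ∀ T : Finset (Fin n), i ∈ T → ∑ j ∈ T, y j < topSum D #T) :
    ∃ δ > 0, ScheduleFeasible n D (y + (Pi.single i δ : Fin n → ℝ)) := by
  let slack (T : Finset (Fin n)) : ℝ := topSum D #T - ∑ j ∈ T, y j
  obtain ⟨T₀, hT₀, hmin⟩ :=
    (univ.filter (i ∈ ·)).exists_min_image slack ⟨{i}, by simp⟩
  refine ⟨slack T₀, sub_pos.2 (hslack T₀ (mem_filter.1 hT₀).2),
    scheduleFeasible_iff.2 fun T => ?_⟩
  rw [sum_add_single_apply]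
  split_ifs with hiT
  · have := hmin T (mem_filter.2 ⟨mem_univ T, hiT⟩)
    simp only [slack] at this
    linarith
  · simpa using scheduleFeasible_iff.1 hy T

def IsTight (D x : Fin n → ℝ) (T : Finset (Fin n)) : Prop :=
  ∑ j ∈ T, x j = topSum D #T

lemma isTight_empty (D x : Fin n → ℝ) : IsTight D x ∅ := by
  simp [IsTight, topSum_zero]

lemma IsTight.union {D x : Fin n → ℝ} (hD : Antitone D) (hD0 : 0 ≤ D)
    (hx : ScheduleFeasible n D x) {S T : Finset (Fin n)} (hS : IsTight D x S)
    (hT : IsTight D x T) : IsTight D x (S ∪ T) := by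
  -- Concavity of `topSum D` makes `T ↦ topSum D #T` submodular.
  have hcard := card_union_add_card_inter S T
  have hST := card_le_card (inter_subset_left : S ∩ T ⊆ S)
  have hsub := topSum_add_add_le hD hD0 (card_le_card (inter_subset_right : S ∩ T ⊆ T))
    (#S - #(S ∩ T))
  rw [show #T + (#S - #(S ∩ T)) = #(S ∪ T) by omega,
    show #(S ∩ T) + (#S - #(S ∩ T)) = #S by omega] at hsub
  have hsum : ∑ j ∈ S ∪ T, x j + ∑ j ∈ S ∩ T, x j = ∑ j ∈ S, x j + ∑ j ∈ T, x j :=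
    sum_union_inter
  have hunion : ∑ j ∈ S ∪ T, x j ≤ topSum D #(S ∪ T) := hx _
  have hinter : ∑ j ∈ S ∩ T, x j ≤ topSum D #(S ∩ T) := hx _
  unfold IsTight at hS hT ⊢
  linarith

lemma isTight_sup {D x : Fin n → ℝ} (hD : Antitone D) (hD0 : 0 ≤ D)
    (hx : ScheduleFeasible n D x) {ι : Type*} (s : Finset ι) {T : ι → Finset (Fin n)}
    (hT : ∀ k ∈ s, IsTight D x (T k)) : IsTight D x (s.sup T) :=
  sup_induction (isTight_empty D x) (fun _ h₁ _ h₂ => h₁.union hD hD0 hx h₂) hT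

def truncate (x : Fin n → ℝ) (m : ℕ) : Fin n → ℝ :=
  fun j => if (j : ℕ) < m then x j else 0

lemma truncate_zero (x : Fin n → ℝ) : truncate x 0 = 0 := by
  funext j
  simp [truncate]

lemma truncate_self (x : Fin n → ℝ) : truncate x n = x := by
  funext j
  simp [truncate]

lemma truncate_succ (x : Fin n → ℝ) (i : Fin n) :
    truncate x (i + 1) = truncate x i + Pi.single i (x i) := by
  funext j
  rcases lt_trichotomy j i with h | rfl | h
  · simp [truncate, h, h.ne, Nat.lt_succ_of_lt (Fin.lt_def.1 h)]
  · simp [truncate]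
  · simp [truncate, h.ne', not_lt_of_gt h, not_le_of_gt (Fin.lt_def.1 h)]

def partialAlloc (x : Fin n → ℝ) (i : Fin n) (c : ℝ) : Fin n → ℝ :=
  fun j => if j < i then x j else if j = i then c else 0

lemma partialAlloc_eq (x : Fin n → ℝ) (i : Fin n) (c : ℝ) :
    partialAlloc x i c = truncate x i + Pi.single i c := by
  funext j
  rcases lt_trichotomy j i with h | rfl | h
  · simp [partialAlloc, truncate, h, h.ne, Fin.lt_def.1 h]
  · simp [partialAlloc, truncate]
  · simp [partialAlloc, truncate, h.ne', not_lt_of_gt h, not_lt_of_gt (Fin.lt_def.1 h)]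

def admissibleClicks (D u x : Fin n → ℝ) (i : Fin n) : Set ℝ :=
  {c | 0 ≤ c ∧ c ≤ u i ∧ ScheduleFeasible n D (partialAlloc x i c)}

lemma isGreatest_sSup_admissibleClicks {D u x : Fin n → ℝ} {i : Fin n}
    (hu : 0 ≤ u i) (hx : ScheduleFeasible n D (truncate x i)) :
    IsGreatest (admissibleClicks D u x i) (sSup (admissibleClicks D u x i)) := by
  have hzero : 0 ∈ admissibleClicks D u x i :=
    ⟨le_rfl, hu, by rwa [partialAlloc_eq, Pi.single_zero, add_zero]⟩
  have hbdd : BddAbove (admissibleClicks D u x i) := ⟨u i, fun c hc => hc.2.1⟩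
  have hclosed : IsClosed (admissibleClicks D u x i) := by
    simp only [admissibleClicks, partialAlloc_eq, Set.ofPred_and]
    exact isClosed_Ici.inter (isClosed_Iic.inter (isClosed_setOf_scheduleFeasible D
      (continuous_const.add (continuous_single (A := fun _ => ℝ) i))))
  exact ⟨hclosed.csSup_mem ⟨0, hzero⟩ hbdd, fun c hc => le_csSup hbdd hc⟩

noncomputable def greedy (D u : Fin n → ℝ) (i : Fin n) : ℝ :=
  sSup {c : ℝ | 0 ≤ c ∧ c ≤ u i ∧
    ScheduleFeasible n D fun j => if j < i then greedy D u j else if j = i then c else 0}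
termination_by (i : ℕ)

lemma greedy_eq_sSup (D u : Fin n → ℝ) (i : Fin n) :
    greedy D u i = sSup (admissibleClicks D u (greedy D u) i) := by
  rw [greedy]
  rfl

lemma isTight_filter_le_of_sum_truncate_eq {D x : Fin n → ℝ} (hD0 : 0 ≤ D)
    (hx : ScheduleFeasible n D x) {i : Fin n} {T : Finset (Fin n)}
    (hT : ∑ j ∈ T, truncate x (i + 1) j = topSum D #T) : IsTight D x (T.filter (· ≤ i)) := by
  have hsum : ∑ j ∈ T.filter (· ≤ i), x j = ∑ j ∈ T, truncate x (i + 1) j := by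
    simp only [sum_filter, truncate, Nat.lt_succ_iff, Fin.val_fin_le]
  refine le_antisymm (hx _) ?_
  rw [hsum, hT]
  exact topSum_mono hD0 (card_le_card (filter_subset _ _))

section Greedy

variable {D u : Fin n → ℝ} (hD0 : 0 ≤ D) (hu : 0 ≤ u)
include hD0 hu

lemma scheduleFeasible_truncate_greedy :
    ∀ m ≤ n, ScheduleFeasible n D (truncate (greedy D u) m)
  | 0, _ => by simpa [truncate_zero] using scheduleFeasible_zero hD0
  | m + 1, hm => by
    have hmax := isGreatest_sSup_admissibleClicks (u := u) (i := ⟨m, hm⟩) (hu _)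
      (scheduleFeasible_truncate_greedy m (by omega))
    have := hmax.1.2.2
    rwa [← greedy_eq_sSup, partialAlloc_eq, ← truncate_succ] at this

lemma greedy_isGreatest (i : Fin n) :
    IsGreatest (admissibleClicks D u (greedy D u) i) (greedy D u i) := by
  rw [greedy_eq_sSup]
  exact isGreatest_sSup_admissibleClicks (hu i)
    (scheduleFeasible_truncate_greedy hD0 hu i i.isLt.le)

lemma greedy_nonneg (i : Fin n) : 0 ≤ greedy D u i :=
  (greedy_isGreatest hD0 hu i).1.1

lemma greedy_le (i : Fin n) : greedy D u i ≤ u i :=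
  (greedy_isGreatest hD0 hu i).1.2.1

lemma greedy_scheduleFeasible : ScheduleFeasible n D (greedy D u) := by
  simpa [truncate_self] using scheduleFeasible_truncate_greedy hD0 hu n le_rfl

lemma exists_isTight_greedy (i : Fin n) :
    ∃ T ⊆ Iic i, IsTight D (greedy D u) T ∧ (greedy D u i < u i → i ∈ T) := by
  set x := greedy D u
  by_cases hunsat : x i < u i
  swap
  · exact ⟨∅, empty_subset _, isTight_empty D x, fun h => absurd h hunsat⟩
  -- Otherwise every set containing `i` keeps slack after step `i`, so bidder `i` could get more.
  by_contra hnone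
  have hy := scheduleFeasible_truncate_greedy hD0 hu (i + 1) i.isLt
  have hslack : ∀ T : Finset (Fin n), i ∈ T → ∑ j ∈ T, truncate x (i + 1) j < topSum D #T :=
    fun T hiT => (scheduleFeasible_iff.1 hy T).lt_of_ne fun htight => hnone ⟨T.filter (· ≤ i),
      fun j hj => mem_Iic.2 (mem_filter.1 hj).2,
      isTight_filter_le_of_sum_truncate_eq hD0 (greedy_scheduleFeasible hD0 hu) htight,
      fun _ => mem_filter.2 ⟨hiT, le_rfl⟩⟩
  obtain ⟨δ, hδ, hfeas⟩ := exists_pos_scheduleFeasible_add_single hy hslack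
  set ε := min δ (u i - x i)
  have hε : 0 < ε := lt_min hδ (sub_pos.2 hunsat)
  have hmem : x i + ε ∈ admissibleClicks D u x i := by
    refine ⟨by linarith [greedy_nonneg hD0 hu i], by linarith [min_le_right δ (u i - x i)], ?_⟩
    rw [partialAlloc_eq, Pi.single_add, ← add_assoc, ← truncate_succ]
    exact hfeas.mono (add_le_add_right (Pi.single_mono i (min_le_left δ _)) _)
  linarith [(greedy_isGreatest hD0 hu i).2 hmem]

lemma sum_filter_le_sum_filter_greedy (hD : Antitone D) {c : Fin n → ℝ} (hcu : c ≤ u)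
    (hc : ScheduleFeasible n D c) (m : ℕ) :
    ∑ j ∈ univ.filter (fun j : Fin n => (j : ℕ) < m), c j
      ≤ ∑ j ∈ univ.filter (fun j : Fin n => (j : ℕ) < m), greedy D u j := by
  choose T hTsub hTtight hTmem using exists_isTight_greedy hD0 hu
  set P := univ.filter (fun j : Fin n => (j : ℕ) < m)
  set U := P.sup T
  have hUP : U ⊆ P := Finset.sup_le fun j hj k hk => by
    have hkj : k ≤ j := mem_Iic.1 (hTsub j hk)
    simp only [P, mem_filter, mem_univ, true_and] at hj ⊢
    exact lt_of_le_of_lt hkj hj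
  have hsat : ∀ j ∈ P \ U, greedy D u j = u j := fun j hj => by
    obtain ⟨hjP, hjU⟩ := mem_sdiff.1 hj
    by_contra hne
    exact hjU ((le_sup hjP : T j ⊆ U) (hTmem j ((greedy_le hD0 hu j).lt_of_ne hne)))
  have hU : IsTight D (greedy D u) U :=
    isTight_sup hD hD0 (greedy_scheduleFeasible hD0 hu) P fun j _ => hTtight j
  calc ∑ j ∈ P, c j = ∑ j ∈ P \ U, c j + ∑ j ∈ U, c j := (sum_sdiff hUP).symm
    _ ≤ ∑ j ∈ P \ U, greedy D u j + ∑ j ∈ U, greedy D u j :=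
        add_le_add (sum_le_sum fun j hj => (hsat j hj).symm ▸ hcu j) ((hc U).trans hU.ge)
    _ = ∑ j ∈ P, greedy D u j := sum_sdiff hUP

end Greedy

lemma mul_sum_range_le_sum_range_mul {w d : ℕ → ℝ} (hw : Antitone w) :
    ∀ N : ℕ, (∀ m ≤ N, 0 ≤ ∑ k ∈ range m, d k) →
      w N * ∑ k ∈ range N, d k ≤ ∑ k ∈ range N, w k * d k
  | 0, _ => by simp
  | N + 1, hd => by
    have ih := mul_sum_range_le_sum_range_mul hw N fun m hm => hd m (by omega)
    have hstep : 0 ≤ (w N - w (N + 1)) * ∑ k ∈ range (N + 1), d k :=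
      mul_nonneg (sub_nonneg.2 (hw (Nat.le_succ N))) (hd _ le_rfl)
    rw [sum_range_succ] at hstep ⊢
    rw [sum_range_succ]
    linear_combination ih + hstep

lemma sum_mul_le_sum_mul_of_sum_filter_le {w c x : Fin n → ℝ} (hw : Antitone w) (hw0 : 0 ≤ w)
    (hcx : ∀ m, ∑ j ∈ univ.filter (fun j : Fin n => (j : ℕ) < m), c j
      ≤ ∑ j ∈ univ.filter (fun j : Fin n => (j : ℕ) < m), x j) :
    ∑ i, w i * c i ≤ ∑ i, w i * x i := by
  set d : ℕ → ℝ := fun k => zeroExtend x k - zeroExtend c k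
  have hd : ∀ m ≤ n, 0 ≤ ∑ k ∈ range m, d k := fun m _ => by
    simpa [d, sum_sub_distrib, ← sum_filter_val_lt_eq_sum_range] using hcx m
  have habel := mul_sum_range_le_sum_range_mul (zeroExtend_antitone hw hw0) n hd
  have hext : zeroExtend w n = 0 := dif_neg (lt_irrefl n)
  have hsum : ∑ i, w i * x i - ∑ i, w i * c i = ∑ k ∈ range n, zeroExtend w k * d k := by
    rw [← sum_sub_distrib, ← Fin.sum_univ_eq_sum_range]
    simp [d, mul_sub]
  rw [hext, zero_mul] at habel
  linarith

end GreedyFirstPrice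

open GreedyFirstPrice

/-- The greedy first-price mechanism processes bidders in decreasing order of
bid (`b` is given already sorted, decreasing) and gives bidder `i` the maximum
number of clicks `c` with `c ≤ B i / b i` keeping the partial click vector
schedule-feasible.  The resulting click vector `cG` is schedule-feasible,
respects all budget caps, and maximizes the revenue `Σ_i b_i·c_i` among all
nonnegative schedule-feasible click vectors respecting the budget caps. -/
theorem gfp_multi_slot_revenue_maximizing (n : ℕ) (b B D : Fin n → ℝ)
    (hb : Antitone b) (hbpos : ∀ i, 0 < b i) (hB : ∀ i, 0 < B i)
    (hD : StrictAnti D) (hD0 : ∀ j, 0 ≤ D j) :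
    ∃ cG : Fin n → ℝ,
      (∀ i : Fin n, IsGreatest {c : ℝ | 0 ≤ c ∧ c ≤ B i / b i ∧
          ScheduleFeasible n D
            (fun j => if j < i then cG j else if j = i then c else 0)} (cG i)) ∧
      ScheduleFeasible n D cG ∧
      (∀ i, cG i ≤ B i / b i) ∧
      IsGreatest {r : ℝ | ∃ c : Fin n → ℝ, (∀ i, 0 ≤ c i) ∧
          (∀ i, c i ≤ B i / b i) ∧ ScheduleFeasible n D c ∧
          r = ∑ i, b i * c i}
        (∑ i, b i * cG i) := by
  have hu : ∀ i, 0 ≤ B i / b i := fun i => (div_pos (hB i) (hbpos i)).le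
  refine ⟨greedy D (fun i => B i / b i), greedy_isGreatest hD0 hu, greedy_scheduleFeasible hD0 hu,
    greedy_le hD0 hu, ⟨⟨_, greedy_nonneg hD0 hu, greedy_le hD0 hu,
      greedy_scheduleFeasible hD0 hu, rfl⟩, ?_⟩⟩
  rintro r ⟨c, -, hcu, hc, rfl⟩
  exact sum_mul_le_sum_mul_of_sum_filter_le hb (fun i => (hbpos i).le)
    (sum_filter_le_sum_filter_greedy hD0 hu hD.antitone hcu hc)
end

section
/- In the Markovian user model, for any set of k distinct bidders, the efficiency of an assignment of these bidders to the k positions is maximized by ordering them in nonincreasing order of adjusted ecpm a_i = e_i/(1 − q_i): for every injective sequence (x_1, …, x_k), the sequence obtained by reordering the same bidders so that their adjusted ecpms are nonincreasing has efficiency at least as large. Consequently, in a most efficient assignment the placed ads may be taken sorted in decreasing order of adjusted ecpm. -/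
/-!
Read as a list `b :: l`, an assignment has efficiency `e b + q b · eff l`, and
`e b = (1 - q b) · a b`. Hence `eff l` is a combination of the adjusted ecpms of `l` with
nonnegative weights `(1 - q_j) ∏_{i<j} q_i` of total `1 - ∏ q`, so it is at most `A · (1 - ∏ q)`
when every adjusted ecpm in `l` is at most `A`. This bound shows that moving a bidder in front of
a block of bidders with smaller adjusted ecpm does not decrease efficiency; moving the first bidder
of the sorted order to the front and recursing on the rest turns any assignment into the sorted one.
-/

/-- Efficiency of an assignment `x` of bidders to `k` positions in the
Markovian user model: `Σ_j e (x j) · Π_{l < j} q (x l)`. -/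
noncomputable def eff (n : ℕ) (e q : Fin n → ℝ) (k : ℕ) (x : Fin k → Fin n) : ℝ :=
  ∑ j : Fin k, e (x j) * ∏ l ∈ Finset.univ.filter (fun l => l < j), q (x l)

namespace MarkovianUserModel

variable {ι : Type*} (e q : ι → ℝ)

noncomputable def adjustedEcpm (i : ι) : ℝ := e i / (1 - q i)

def effList : List ι → ℝ
  | [] => 0
  | b :: l => e b + q b * effList l

theorem effList_append (u v : List ι) :
    effList e q (u ++ v) = effList e q u + (u.map q).prod * effList e q v := by
  induction u with
  | nil => simp [effList]
  | cons b u ih => simp only [List.cons_append, effList, ih, List.map_cons, List.prod_cons]; ring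

variable {e q}

theorem effList_le_mul_one_sub_prod (hq0 : ∀ i, 0 ≤ q i) (hq1 : ∀ i, q i < 1) {A : ℝ}
    {u : List ι} (hA : ∀ c ∈ u, adjustedEcpm e q c ≤ A) :
    effList e q u ≤ A * (1 - (u.map q).prod) := by
  induction u with
  | nil => simp [effList]
  | cons b u ih =>
    have hb : e b ≤ A * (1 - q b) :=
      (div_le_iff₀ (sub_pos.2 (hq1 b))).1 (hA b List.mem_cons_self)
    have hu := mul_le_mul_of_nonneg_left (ih fun c hc => hA c (List.mem_cons_of_mem b hc)) (hq0 b)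
    simp only [effList, List.map_cons, List.prod_cons]
    linarith

theorem effList_le_effList_move_to_front (hq0 : ∀ i, 0 ≤ q i) (hq1 : ∀ i, q i < 1)
    {u w : List ι} {b : ι} (hb : ∀ c ∈ u, adjustedEcpm e q c ≤ adjustedEcpm e q b) :
    effList e q (u ++ b :: w) ≤ effList e q (b :: (u ++ w)) := by
  have hu := mul_le_mul_of_nonneg_left (effList_le_mul_one_sub_prod hq0 hq1 hb)
    (sub_pos.2 (hq1 b)).le
  have hab : (1 - q b) * adjustedEcpm e q b = e b :=
    mul_div_cancel₀ (e b) (sub_pos.2 (hq1 b)).ne'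
  simp only [effList, effList_append]
  linear_combination hu + (1 - (u.map q).prod) * hab

theorem effList_le_of_perm_of_pairwise (hq0 : ∀ i, 0 ≤ q i) (hq1 : ∀ i, q i < 1)
    {l l' : List ι} (hperm : l.Perm l')
    (hsorted : l'.Pairwise fun i j => adjustedEcpm e q j ≤ adjustedEcpm e q i) :
    effList e q l ≤ effList e q l' := by
  induction l' generalizing l with
  | nil => rw [List.perm_nil.1 hperm]
  | cons b t ih =>
    obtain ⟨hb, ht⟩ := List.pairwise_cons.1 hsorted
    obtain ⟨u, w, rfl⟩ := List.append_of_mem (hperm.mem_iff.2 List.mem_cons_self)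
    have huw : (u ++ w).Perm t := (List.perm_middle.symm.trans hperm).cons_inv
    calc effList e q (u ++ b :: w)
        ≤ effList e q (b :: (u ++ w)) := effList_le_effList_move_to_front hq0 hq1
          fun c hc => hb c (huw.subset (List.mem_append_left w hc))
      _ ≤ effList e q (b :: t) :=
          add_le_add_right (mul_le_mul_of_nonneg_left (ih huw ht) (hq0 b)) (e b)

end MarkovianUserModel

open MarkovianUserModel

theorem eff_succ (n : ℕ) (e q : Fin n → ℝ) (k : ℕ) (x : Fin (k + 1) → Fin n) :
    eff n e q (k + 1) x = e (x 0) + q (x 0) * eff n e q k (fun i => x i.succ) := by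
  simp only [eff, Finset.prod_filter, Fin.sum_univ_succ, Fin.prod_univ_succ, Fin.succ_lt_succ_iff,
    Fin.succ_pos, Fin.not_lt_zero, if_true, if_false, Finset.prod_const_one, mul_one,
    Finset.mul_sum]
  congr 1
  exact Finset.sum_congr rfl fun j _ => by ring

theorem eff_eq_effList_ofFn (n : ℕ) (e q : Fin n → ℝ) (k : ℕ) (x : Fin k → Fin n) :
    eff n e q k x = effList e q (List.ofFn x) := by
  induction k with
  | zero => simp [eff, effList]
  | succ k ih => rw [eff_succ, ih, List.ofFn_succ, effList]

theorem sorted_by_adjusted_ecpm_is_optimal_general (n k : ℕ)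
    (e q : Fin n → ℝ)
    (hq0 : ∀ i, 0 ≤ q i) (hq1 : ∀ i, q i < 1)
    (x y : Fin k → Fin n)
    (hx : Function.Injective x)
    (hrange : Set.range y = Set.range x)
    (hsort : Antitone (fun j => e (y j) / (1 - q (y j)))) :
    eff n e q k x ≤ eff n e q k y := by
  have hsub : List.ofFn x ⊆ List.ofFn y := fun b hb => by
    rw [List.mem_ofFn] at hb ⊢
    rwa [← Set.mem_range, hrange, Set.mem_range]
  have hperm : (List.ofFn x).Perm (List.ofFn y) :=
    (List.subperm_of_subset (List.nodup_ofFn.2 hx) hsub).perm_of_length_le (by simp)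
  have hsorted : (List.ofFn y).Pairwise fun i j => adjustedEcpm e q j ≤ adjustedEcpm e q i :=
    List.pairwise_ofFn.2 fun _ _ hij => hsort hij.le
  rw [eff_eq_effList_ofFn, eff_eq_effList_ofFn]
  exact effList_le_of_perm_of_pairwise hq0 hq1 hperm hsorted

/-- In the Markovian user model, for any fixed set of `k` distinct bidders,
sorting them in nonincreasing order of adjusted ecpm `a_i = e_i/(1 − q_i)`
maximizes efficiency: if `y` assigns the same bidders as `x` but sorted by
adjusted ecpm (nonincreasing), then `eff y ≥ eff x`. -/
theorem sorted_by_adjusted_ecpm_is_optimal (n k : ℕ) (hk : k ≤ n)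
    (e q : Fin n → ℝ) (he : ∀ i, 0 ≤ e i)
    (hq0 : ∀ i, 0 ≤ q i) (hq1 : ∀ i, q i < 1)
    (x y : Fin k → Fin n)
    (hx : Function.Injective x) (hy : Function.Injective y)
    (hrange : Set.range y = Set.range x)
    (hsort : Antitone (fun j => e (y j) / (1 - q (y j)))) :
    eff n e q k x ≤ eff n e q k y :=
  sorted_by_adjusted_ecpm_is_optimal_general n k e q hq0 hq1 x y hx hrange hsort
end

section
/- In the Markovian user model, let C be an arbitrary set of bidders and let j be a number of positions with 1 ≤ j ≤ |C|. Then for every S ∈ OPT(C, j−1) there exists S' ∈ OPT(C, j) with S ⊊ S'; that is, every optimal set of bidders for j−1 positions is contained in some optimal set of bidders for j positions. -/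
/-- The value of a finite set `S` of bidders: the best efficiency obtainable
by arranging the members of `S` in the `S.card` positions. -/
noncomputable def setValue (n : ℕ) (e q : Fin n → ℝ) (S : Finset (Fin n)) : ℝ :=
  sSup {r : ℝ | ∃ x : Fin S.card → Fin n,
    Function.Injective x ∧ (∀ j, x j ∈ S) ∧ r = eff n e q S.card x}

/-!
Sort the bidders by nonincreasing adjusted ecpm `a i = e i / (1 - q i)`. An adjacent swap into this
order does not decrease efficiency, so the value of a set is the efficiency of its members listed in
this order, and the best `k`-subsets of a sorted list `d :: L` are found by a dynamic program: skip
`d`, or place `d` first and fill `k - 1` positions from `L`.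

Measured from `a d`, the deficits `s k = a d - optValue L k` form a log-convex sequence: prepending
a bidder `d` replaces `s (k + 1)` by `min (s (k + 1)) (q d * s k)`, and shifting by a nonnegative
constant preserves log-convexity. Taking `d` is optimal for `k + 1` positions exactly when
`s (k + 1) / s k ≥ q d`; as this ratio is nondecreasing, once an optimal set uses `d` it keeps doing
so, and an induction along the sorted list extends every optimal set by one bidder.
-/

def LogConvexSeq (s : ℕ → ℝ) : Prop :=
  ∀ k, s (k + 1) ^ 2 ≤ s k * s (k + 2)

namespace LogConvexSeq

variable {s : ℕ → ℝ}

theorem mul_middle_le (hs : LogConvexSeq s) (h0 : ∀ k, 0 ≤ s k) (k : ℕ) :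
    s (k + 1) * s (k + 2) ≤ s k * s (k + 3) := by
  have h₁ := hs k
  have h₂ := hs (k + 1)
  rcases (mul_nonneg (h0 (k + 1)) (h0 (k + 2))).eq_or_lt with hz | hpos
  · rw [← hz]; exact mul_nonneg (h0 k) (h0 (k + 3))
  · refine le_of_mul_le_mul_left ?_ hpos
    nlinarith [mul_le_mul h₁ h₂ (sq_nonneg _) (mul_nonneg (h0 k) (h0 (k + 2)))]

theorem add_const (hs : LogConvexSeq s) (h0 : ∀ k, 0 ≤ s k) {δ : ℝ} (hδ : 0 ≤ δ) :
    LogConvexSeq fun k => δ + s k := by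
  intro k
  -- AM-GM: `2 s (k+1) ≤ 2 √(s k s (k+2)) ≤ s k + s (k+2)`
  have hmid : 2 * s (k + 1) ≤ s k + s (k + 2) := by
    nlinarith [hs k, sq_nonneg (s k - s (k + 2)), h0 k, h0 (k + 1), h0 (k + 2)]
  nlinarith [hs k]

theorem min_shift (hs : LogConvexSeq s) (h0 : ∀ k, 0 ≤ s k) {c : ℝ} (hc : 0 ≤ c)
    {u : ℕ → ℝ} (hu₀ : u 0 = s 0) (hu : ∀ k, u (k + 1) = min (s (k + 1)) (c * s k)) :
    LogConvexSeq u := by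
  intro k
  cases k with
  | zero =>
    rw [hu₀, hu 0, hu 1]
    have hm := min_le_left (s 1) (c * s 0)
    have hm' := min_le_right (s 1) (c * s 0)
    have hm0 : 0 ≤ min (s 1) (c * s 0) := le_min (h0 1) (mul_nonneg hc (h0 0))
    rcases min_cases (s 2) (c * s 1) with ⟨h, -⟩ | ⟨h, -⟩ <;> rw [h]
    · nlinarith [hs 0]
    · nlinarith [h0 0]
  | succ k =>
    rw [hu k, hu (k + 1), hu (k + 2)]
    have hm := min_le_left (s (k + 2)) (c * s (k + 1))
    have hm' := min_le_right (s (k + 2)) (c * s (k + 1))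
    have hm0 : 0 ≤ min (s (k + 2)) (c * s (k + 1)) :=
      le_min (h0 _) (mul_nonneg hc (h0 _))
    have := h0 k; have := h0 (k + 1); have := h0 (k + 2); have := h0 (k + 3)
    rcases min_cases (s (k + 1)) (c * s k) with ⟨h, -⟩ | ⟨h, -⟩ <;>
      rcases min_cases (s (k + 3)) (c * s (k + 2)) with ⟨h', -⟩ | ⟨h', -⟩ <;> rw [h, h']
    · nlinarith [hs (k + 1)]
    · nlinarith
    · nlinarith [hs.mul_middle_le h0 k]
    · nlinarith [hs k, mul_le_mul_of_nonneg_left (hs k) (mul_nonneg hc hc)]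

theorem mul_le_succ (hs : LogConvexSeq s) (h0 : ∀ k, 0 ≤ s k) {c : ℝ} {k : ℕ}
    (h : c * s k ≤ s (k + 1)) : c * s (k + 1) ≤ s (k + 2) := by
  rcases (h0 k).eq_or_lt with hz | hpos
  · have hsq := hs k
    rw [← hz, zero_mul] at hsq
    rw [pow_eq_zero_iff two_ne_zero |>.1 (le_antisymm hsq (sq_nonneg _)), mul_zero]
    exact h0 _
  · refine le_of_mul_le_mul_left ?_ hpos
    nlinarith [hs k, h0 (k + 1)]

end LogConvexSeq

theorem List.Sublist.exists_sublist_length_eq_succ {α : Type*} {l L : List α} (h : l.Sublist L)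
    (hlt : l.length < L.length) :
    ∃ l', l.Sublist l' ∧ l'.Sublist L ∧ l'.length = l.length + 1 := by
  induction L generalizing l with
  | nil => simp at hlt
  | cons d L ih =>
    rcases List.sublist_cons_iff.1 h with h | ⟨r, rfl, hr⟩
    · rcases (h.length_le).lt_or_eq with hlt' | heq
      · obtain ⟨l', h₁, h₂, h₃⟩ := ih h hlt'
        exact ⟨l', h₁, h₂.cons d, h₃⟩
      · rw [h.eq_of_length heq]
        exact ⟨d :: L, L.sublist_cons_self d, List.Sublist.refl _, rfl⟩
    · obtain ⟨l', h₁, h₂, h₃⟩ := ih hr (by simpa using hlt)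
      exact ⟨d :: l', h₁.cons_cons d, h₂.cons_cons d, by simp [h₃]⟩

theorem List.exists_sublist_toFinset_eq {α : Type*} [DecidableEq α] {L : List α} {T : Finset α}
    (h : T ⊆ L.toFinset) : ∃ l : List α, l.Sublist L ∧ l.toFinset = T :=
  ⟨L.filter (· ∈ T), List.filter_sublist, by
    ext x
    simpa using fun hx => List.mem_toFinset.1 (h hx)⟩

namespace MarkovUser

variable {n : ℕ} (e q : Fin n → ℝ)

def listEff : List (Fin n) → ℝ
  | [] => 0
  | i :: l => e i + q i * listEff l

noncomputable def adjEcpm (i : Fin n) : ℝ := e i / (1 - q i)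

def AdjSorted (L : List (Fin n)) : Prop :=
  L.Pairwise fun i k => adjEcpm e q k ≤ adjEcpm e q i

/-- The best efficiency of a `k`-element sublist of `L`, for `L` sorted by adjusted ecpm and
`k ≤ L.length`: either skip the head `d`, or place it first and fill the rest from the tail. -/
noncomputable def optValue : List (Fin n) → ℕ → ℝ
  | _, 0 => 0
  | [], _ + 1 => 0
  | d :: L, k + 1 => max (optValue L (k + 1)) (e d + q d * optValue L k)

/-- Taking the head `d` is optimal for `k + 1` positions in `d :: L`. -/
def HeadOptimal (d : Fin n) (L : List (Fin n)) (k : ℕ) : Prop :=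
  optValue e q L (k + 1) ≤ e d + q d * optValue e q L k

@[simp] theorem listEff_nil : listEff e q [] = 0 := rfl

@[simp] theorem listEff_cons (i : Fin n) (l : List (Fin n)) :
    listEff e q (i :: l) = e i + q i * listEff e q l := rfl

theorem eff_eq_listEff (k : ℕ) (x : Fin k → Fin n) :
    eff n e q k x = listEff e q (List.ofFn x) := by
  induction k with
  | zero => simp [eff]
  | succ k ih =>
    rw [List.ofFn_succ, listEff_cons, ← ih]
    simp [eff, Fin.sum_univ_succ, Finset.prod_filter, Fin.prod_univ_succ, Fin.succ_pos,
      Finset.mul_sum, mul_left_comm]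

theorem adjEcpm_mul_one_sub (hq1 : ∀ i, q i < 1) (i : Fin n) :
    adjEcpm e q i * (1 - q i) = e i :=
  div_mul_cancel₀ _ (sub_ne_zero.2 (hq1 i).ne')

theorem exists_adjSorted (C : Finset (Fin n)) :
    ∃ L : List (Fin n), L.Nodup ∧ L.toFinset = C ∧ AdjSorted e q L := by
  set le := fun i k => decide (adjEcpm e q k ≤ adjEcpm e q i)
  have hperm := List.mergeSort_perm C.toList le
  refine ⟨C.toList.mergeSort le, hperm.nodup_iff.2 C.nodup_toList,
    (List.toFinset_eq_of_perm _ _ hperm).trans C.toList_toFinset, ?_⟩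
  have := List.pairwise_mergeSort (le := le)
    (fun _ _ _ => by simpa [le] using fun h₁ h₂ => h₂.trans h₁)
    (fun _ _ => by simpa [le] using le_total _ _) C.toList
  simpa [AdjSorted, le] using this

variable {e q}

theorem adjEcpm_nonneg (he : ∀ i, 0 ≤ e i) (hq1 : ∀ i, q i < 1) (i : Fin n) :
    0 ≤ adjEcpm e q i :=
  div_nonneg (he i) (sub_nonneg.2 (hq1 i).le)

theorem le_add_mul_iff_le_adjEcpm (hq1 : ∀ i, q i < 1) (i : Fin n) (x : ℝ) :
    x ≤ e i + q i * x ↔ x ≤ adjEcpm e q i := by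
  have hi := adjEcpm_mul_one_sub e q hq1 i
  generalize adjEcpm e q i = a at hi ⊢
  rw [← hi]
  have := hq1 i
  constructor <;> intro h <;> nlinarith

theorem add_mul_le_of_adjEcpm_le (hq0 : ∀ i, 0 ≤ q i) (hq1 : ∀ i, q i < 1) {i : Fin n}
    {A x : ℝ} (hi : adjEcpm e q i ≤ A) (hx : x ≤ A) : e i + q i * x ≤ A := by
  rw [← adjEcpm_mul_one_sub e q hq1 i]
  nlinarith [hq0 i, hq1 i]

theorem listEff_cons_le_cons (hq0 : ∀ i, 0 ≤ q i) (i : Fin n) {l l' : List (Fin n)}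
    (h : listEff e q l ≤ listEff e q l') : listEff e q (i :: l) ≤ listEff e q (i :: l') := by
  simpa using mul_le_mul_of_nonneg_left h (hq0 i)

theorem listEff_swap_le (hq1 : ∀ i, q i < 1) {i k : Fin n} (h : adjEcpm e q i ≤ adjEcpm e q k)
    (l : List (Fin n)) : listEff e q (i :: k :: l) ≤ listEff e q (k :: i :: l) := by
  -- the difference is `(1 - q i) (1 - q k) (adjEcpm i - adjEcpm k)`
  have hi := adjEcpm_mul_one_sub e q hq1 i
  have hk := adjEcpm_mul_one_sub e q hq1 k
  generalize adjEcpm e q i = ai at h hi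
  generalize adjEcpm e q k = ak at h hk
  simp only [listEff_cons, ← hi, ← hk]
  nlinarith [mul_nonneg (sub_nonneg.2 (hq1 i).le) (sub_nonneg.2 (hq1 k).le)]

theorem listEff_append_cons_le (hq0 : ∀ i, 0 ≤ q i) (hq1 : ∀ i, q i < 1) {d : Fin n}
    {l₁ : List (Fin n)} (h : ∀ z ∈ l₁, adjEcpm e q z ≤ adjEcpm e q d) (l₂ : List (Fin n)) :
    listEff e q (l₁ ++ d :: l₂) ≤ listEff e q (d :: (l₁ ++ l₂)) := by
  induction l₁ with
  | nil => rfl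
  | cons i l₁ ih =>
    calc listEff e q (i :: (l₁ ++ d :: l₂))
        ≤ listEff e q (i :: d :: (l₁ ++ l₂)) :=
          listEff_cons_le_cons hq0 i (ih fun z hz => h z (List.mem_cons_of_mem i hz))
      _ ≤ listEff e q (d :: i :: (l₁ ++ l₂)) := listEff_swap_le hq1 (h i List.mem_cons_self) _

theorem listEff_le_of_perm (hq0 : ∀ i, 0 ≤ q i) (hq1 : ∀ i, q i < 1) {l l₀ : List (Fin n)}
    (hs : AdjSorted e q l₀) (hp : l.Perm l₀) : listEff e q l ≤ listEff e q l₀ := by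
  induction l₀ generalizing l with
  | nil => rw [List.perm_nil.1 hp]
  | cons d l₀ ih =>
    obtain ⟨hd, hs⟩ := List.pairwise_cons.1 hs
    obtain ⟨l₁, l₂, rfl⟩ := List.append_of_mem (hp.symm.subset List.mem_cons_self)
    have hp' : (l₁ ++ l₂).Perm l₀ := (List.perm_middle.symm.trans hp).cons_inv
    calc listEff e q (l₁ ++ d :: l₂) ≤ listEff e q (d :: (l₁ ++ l₂)) :=
          listEff_append_cons_le hq0 hq1
            (fun z hz => hd z (hp'.subset (List.mem_append_left l₂ hz))) l₂
      _ ≤ listEff e q (d :: l₀) := listEff_cons_le_cons hq0 d (ih hs hp')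

theorem setValue_toFinset (hq0 : ∀ i, 0 ≤ q i) (hq1 : ∀ i, q i < 1) {l : List (Fin n)}
    (hnd : l.Nodup) (hs : AdjSorted e q l) :
    setValue n e q l.toFinset = listEff e q l := by
  have hcard : l.toFinset.card = l.length := List.toFinset_card_of_nodup hnd
  refine IsGreatest.csSup_eq ⟨⟨fun j => l.get (Fin.cast hcard j), ?_, ?_, ?_⟩, ?_⟩
  · exact (List.nodup_iff_injective_get.1 hnd).comp (Fin.cast_injective hcard)
  · exact fun j => List.mem_toFinset.2 (List.get_mem _ _)
  · rw [eff_eq_listEff]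
    congr 1
    apply List.ext_get <;> simp [hcard]
  · rintro r ⟨x, hinj, hmem, rfl⟩
    rw [eff_eq_listEff]
    refine listEff_le_of_perm hq0 hq1 hs (List.perm_of_nodup_nodup_toFinset_eq
      (List.nodup_ofFn.2 hinj) hnd (Finset.eq_of_subset_of_card_le ?_ ?_))
    · intro z hz
      obtain ⟨j, rfl⟩ := List.mem_ofFn.1 (List.mem_toFinset.1 hz)
      exact hmem j
    · rw [List.toFinset_card_of_nodup (List.nodup_ofFn.2 hinj), List.length_ofFn]

@[simp] theorem optValue_zero (L : List (Fin n)) : optValue e q L 0 = 0 := by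
  cases L <;> rfl

@[simp] theorem optValue_nil (k : ℕ) : optValue e q [] k = 0 := by
  cases k <;> rfl

theorem optValue_cons_succ (d : Fin n) (L : List (Fin n)) (k : ℕ) :
    optValue e q (d :: L) (k + 1) = max (optValue e q L (k + 1)) (e d + q d * optValue e q L k) :=
  rfl

theorem optValue_le_cons (d : Fin n) (L : List (Fin n)) (k : ℕ) :
    optValue e q L k ≤ optValue e q (d :: L) k := by
  cases k with
  | zero => simp
  | succ k => exact le_max_left _ _

theorem optValue_cons_of_headOptimal {d : Fin n} {L : List (Fin n)} {k : ℕ}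
    (h : HeadOptimal e q d L k) : optValue e q (d :: L) (k + 1) = e d + q d * optValue e q L k :=
  max_eq_right h

theorem optValue_cons_of_not_headOptimal {d : Fin n} {L : List (Fin n)} {k : ℕ}
    (h : ¬HeadOptimal e q d L k) : optValue e q (d :: L) (k + 1) = optValue e q L (k + 1) :=
  max_eq_left (not_le.1 h).le

theorem listEff_le_optValue (hq0 : ∀ i, 0 ≤ q i) {l L : List (Fin n)} (h : l.Sublist L) :
    listEff e q l ≤ optValue e q L l.length := by
  induction h with
  | slnil => simp
  | cons d _ ih => exact ih.trans (optValue_le_cons d _ _)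
  | cons_cons d _ ih =>
    exact le_max_of_le_right (add_le_add_right (mul_le_mul_of_nonneg_left ih (hq0 d)) _)

theorem optValue_succ_of_length_le {L : List (Fin n)} {k : ℕ} (h : L.length ≤ k) :
    optValue e q L (k + 1) = optValue e q L k := by
  induction L generalizing k with
  | nil => simp
  | cons d L ih =>
    obtain ⟨k, rfl⟩ : ∃ k', k = k' + 1 := Nat.exists_eq_add_of_le' (by simp at h; omega)
    simp only [List.length_cons, add_le_add_iff_right] at h
    rw [optValue_cons_succ, optValue_cons_succ, ih (by omega), ih h]

theorem optValue_le (hq0 : ∀ i, 0 ≤ q i) (hq1 : ∀ i, q i < 1) {L : List (Fin n)} {A : ℝ}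
    (hA : 0 ≤ A) (h : ∀ z ∈ L, adjEcpm e q z ≤ A) (k : ℕ) : optValue e q L k ≤ A := by
  induction L generalizing k with
  | nil => simpa using hA
  | cons d L ih =>
    have ih := ih fun z hz => h z (List.mem_cons_of_mem d hz)
    cases k with
    | zero => simpa using hA
    | succ k =>
      exact max_le (ih _) (add_mul_le_of_adjEcpm_le hq0 hq1 (h d List.mem_cons_self) (ih k))

theorem headOptimal_of_length_le (he : ∀ i, 0 ≤ e i) (hq0 : ∀ i, 0 ≤ q i) (hq1 : ∀ i, q i < 1)
    {d : Fin n} {L : List (Fin n)} (hd : ∀ z ∈ L, adjEcpm e q z ≤ adjEcpm e q d) {k : ℕ}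
    (h : L.length ≤ k) : HeadOptimal e q d L k := by
  rw [HeadOptimal, optValue_succ_of_length_le h, le_add_mul_iff_le_adjEcpm hq1]
  exact optValue_le hq0 hq1 (adjEcpm_nonneg he hq1 d) hd k

theorem exists_sublist_optValue_eq (he : ∀ i, 0 ≤ e i) (hq0 : ∀ i, 0 ≤ q i)
    (hq1 : ∀ i, q i < 1) {L : List (Fin n)} (hL : AdjSorted e q L) {k : ℕ} (hk : k ≤ L.length) :
    ∃ l, l.Sublist L ∧ l.length = k ∧ listEff e q l = optValue e q L k := by
  induction L generalizing k with
  | nil => exact ⟨[], by simp_all⟩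
  | cons d L ih =>
    obtain ⟨hd, hL⟩ := List.pairwise_cons.1 hL
    cases k with
    | zero => exact ⟨[], by simp⟩
    | succ k =>
      by_cases hk' : HeadOptimal e q d L k
      · obtain ⟨l, hl, rfl, hval⟩ := ih hL (k := k) (by simpa using hk)
        refine ⟨d :: l, hl.cons_cons d, rfl, ?_⟩
        rw [optValue_cons_of_headOptimal hk', listEff_cons, hval]
      · have hk'' : k + 1 ≤ L.length := by
          by_contra hlt
          exact hk' (headOptimal_of_length_le he hq0 hq1 hd (by omega))
        obtain ⟨l, hl, hlen, hval⟩ := ih hL hk''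
        exact ⟨l, hl.cons d, hlen, by rw [optValue_cons_of_not_headOptimal hk', hval]⟩

theorem headOptimal_iff (hq1 : ∀ i, q i < 1) {d : Fin n} {L : List (Fin n)} {k : ℕ} :
    HeadOptimal e q d L k ↔
      q d * (adjEcpm e q d - optValue e q L k) ≤ adjEcpm e q d - optValue e q L (k + 1) := by
  rw [HeadOptimal, ← adjEcpm_mul_one_sub e q hq1 d]
  constructor <;> intro h <;> linarith

theorem logConvexSeq_sub_optValue (he : ∀ i, 0 ≤ e i) (hq0 : ∀ i, 0 ≤ q i)
    (hq1 : ∀ i, q i < 1) {L : List (Fin n)} (hL : AdjSorted e q L) {A : ℝ}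
    (h : ∀ z ∈ L, adjEcpm e q z ≤ A) : LogConvexSeq fun k => A - optValue e q L k := by
  induction L generalizing A with
  | nil => intro k; simp [sq]
  | cons d L ih =>
    obtain ⟨hd, hL⟩ := List.pairwise_cons.1 hL
    set a := adjEcpm e q d
    have ha : 0 ≤ a := adjEcpm_nonneg he hq1 d
    have hs := ih hL hd
    have hs0 : ∀ k, 0 ≤ a - optValue e q L k := fun k => sub_nonneg.2 (optValue_le hq0 hq1 ha hd k)
    have hu : LogConvexSeq fun k => a - optValue e q (d :: L) k := by
      refine hs.min_shift hs0 (hq0 d) (by simp) fun k => ?_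
      have hed : e d = a * (1 - q d) := (adjEcpm_mul_one_sub e q hq1 d).symm
      rw [optValue_cons_succ, ← min_sub_sub_left, hed]
      ring_nf
    have hu0 : ∀ k, 0 ≤ a - optValue e q (d :: L) k := fun k =>
      sub_nonneg.2 (optValue_le hq0 hq1 ha (List.forall_mem_cons.2 ⟨le_rfl, hd⟩) k)
    convert hu.add_const hu0 (sub_nonneg.2 (h d List.mem_cons_self)) using 2 with k
    ring

theorem HeadOptimal.succ (he : ∀ i, 0 ≤ e i) (hq0 : ∀ i, 0 ≤ q i) (hq1 : ∀ i, q i < 1)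
    {d : Fin n} {L : List (Fin n)} (hL : AdjSorted e q (d :: L)) {k : ℕ}
    (h : HeadOptimal e q d L k) : HeadOptimal e q d L (k + 1) := by
  obtain ⟨hd, hL⟩ := List.pairwise_cons.1 hL
  have ha := adjEcpm_nonneg he hq1 d
  rw [headOptimal_iff hq1] at h ⊢
  exact (logConvexSeq_sub_optValue he hq0 hq1 hL hd).mul_le_succ
    (fun k => sub_nonneg.2 (optValue_le hq0 hq1 ha hd k)) h

theorem exists_optimal_extension (he : ∀ i, 0 ≤ e i) (hq0 : ∀ i, 0 ≤ q i)
    (hq1 : ∀ i, q i < 1) {L S : List (Fin n)} (hL : AdjSorted e q L) (hS : S.Sublist L)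
    (hopt : optValue e q L S.length ≤ listEff e q S) (hlt : S.length < L.length) :
    ∃ S', S'.Sublist L ∧ S.Sublist S' ∧ S'.length = S.length + 1 ∧
      optValue e q L (S.length + 1) ≤ listEff e q S' := by
  induction L generalizing S with
  | nil => simp at hlt
  | cons d L ih =>
    have hL' : AdjSorted e q L := (List.pairwise_cons.1 hL).2
    rcases List.sublist_cons_iff.1 hS with hS | ⟨S₀, rfl, hS₀⟩
    · have hoptL := (optValue_le_cons d L _).trans hopt
      by_cases hd : HeadOptimal e q d L S.length
      · refine ⟨d :: S, hS.cons_cons d, S.sublist_cons_self d, rfl, ?_⟩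
        rw [optValue_cons_of_headOptimal hd]
        exact add_le_add_right (mul_le_mul_of_nonneg_left hoptL (hq0 d)) _
      · have hlt' : S.length < L.length := by
          by_contra hge
          exact hd (headOptimal_of_length_le he hq0 hq1 (List.pairwise_cons.1 hL).1 (by omega))
        obtain ⟨S', h₁, h₂, h₃, h₄⟩ := ih hL' hS hoptL hlt'
        exact ⟨S', h₁.cons d, h₂, h₃, by rwa [optValue_cons_of_not_headOptimal hd]⟩
    · have hlt' : S₀.length < L.length := by simpa using hlt
      have hopt' : optValue e q (d :: L) (S₀.length + 1) ≤ e d + q d * listEff e q S₀ := hopt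
      have hd : HeadOptimal e q d L S₀.length := (optValue_le_cons d L _).trans <| hopt'.trans <|
        add_le_add_right (mul_le_mul_of_nonneg_left (listEff_le_optValue hq0 hS₀) (hq0 d)) _
      -- `S'` only enters through `q d * listEff e q S'`, so for `q d = 0` any extension will do.
      obtain ⟨S', h₁, h₂, h₃, h₄⟩ : ∃ S', S'.Sublist L ∧ S₀.Sublist S' ∧
          S'.length = S₀.length + 1 ∧
          q d * optValue e q L (S₀.length + 1) ≤ q d * listEff e q S' := by
        rcases (hq0 d).eq_or_lt with hq | hq
        · obtain ⟨S', h₁, h₂, h₃⟩ := hS₀.exists_sublist_length_eq_succ hlt'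
          exact ⟨S', h₂, h₁, h₃, by simp [← hq]⟩
        · rw [optValue_cons_succ] at hopt'
          have hmax := le_max_right (optValue e q L (S₀.length + 1))
            (e d + q d * optValue e q L S₀.length)
          have hoptS : optValue e q L S₀.length ≤ listEff e q S₀ :=
            le_of_mul_le_mul_left (by linarith) hq
          obtain ⟨S', h₁, h₂, h₃, h₄⟩ := ih hL' hS₀ hoptS hlt'
          exact ⟨S', h₁, h₂, h₃, mul_le_mul_of_nonneg_left h₄ hq.le⟩
      refine ⟨d :: S', h₁.cons_cons d, h₂.cons_cons d, by simp [h₃], ?_⟩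
      rw [List.length_cons, optValue_cons_of_headOptimal (hd.succ he hq0 hq1 hL), listEff_cons]
      linarith

end MarkovUser

open MarkovUser

/-- Subset structure of optimal assignments: for `1 ≤ j ≤ |C|`, every optimal
`(j-1)`-element subset of `C` is strictly contained in some optimal
`j`-element subset of `C`. -/
theorem optimal_sets_are_nested (n : ℕ) (e q : Fin n → ℝ)
    (he : ∀ i, 0 ≤ e i) (hq0 : ∀ i, 0 ≤ q i) (hq1 : ∀ i, q i < 1)
    (C : Finset (Fin n)) (j : ℕ) (hj1 : 1 ≤ j) (hj : j ≤ C.card)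
    (S : Finset (Fin n)) (hSC : S ⊆ C) (hScard : S.card = j - 1)
    (hSopt : ∀ T ⊆ C, T.card = j - 1 → setValue n e q T ≤ setValue n e q S) :
    ∃ S' : Finset (Fin n), S' ⊆ C ∧ S'.card = j ∧
      (∀ T ⊆ C, T.card = j → setValue n e q T ≤ setValue n e q S') ∧
      S ⊂ S' := by
  obtain ⟨L, hLnd, rfl, hL⟩ := exists_adjSorted e q C
  have hcard {l : List (Fin n)} (hl : l.Sublist L) : l.toFinset.card = l.length :=
    List.toFinset_card_of_nodup (hLnd.sublist hl)
  have hval {l : List (Fin n)} (hl : l.Sublist L) : setValue n e q l.toFinset = listEff e q l :=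
    setValue_toFinset hq0 hq1 (hLnd.sublist hl) (hL.sublist hl)
  have hsub {l l' : List (Fin n)} (hl : l.Sublist l') : l.toFinset ⊆ l'.toFinset :=
    Multiset.toFinset_subset.2 hl.subset
  obtain ⟨lS, hlS, rfl⟩ := List.exists_sublist_toFinset_eq hSC
  rw [hcard hlS] at hScard
  rw [hcard (List.Sublist.refl L)] at hj
  obtain ⟨w, hw, hwlen, hwval⟩ := exists_sublist_optValue_eq he hq0 hq1 hL (k := j - 1) (by omega)
  have hopt : optValue e q L lS.length ≤ listEff e q lS := by
    rw [hScard, ← hwval, ← hval hw, ← hval hlS]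
    exact hSopt _ (hsub hw) (by rw [hcard hw, hwlen])
  obtain ⟨S', hS'L, hSS', hlen, hS'opt⟩ :=
    exists_optimal_extension he hq0 hq1 hL hlS hopt (by omega)
  refine ⟨S'.toFinset, hsub hS'L, by rw [hcard hS'L]; omega, fun T hT hTcard => ?_, ?_⟩
  · obtain ⟨lT, hlT, rfl⟩ := List.exists_sublist_toFinset_eq hT
    rw [hval hlT, hval hS'L]
    calc listEff e q lT ≤ optValue e q L lT.length := listEff_le_optValue hq0 hlT
      _ = optValue e q L (lS.length + 1) := by rw [← hcard hlT, hTcard]; congr 1; omega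
      _ ≤ listEff e q S' := hS'opt
  · refine (hsub hSS').ssubset_of_ne fun heq => ?_
    have := congrArg Finset.card heq
    rw [hcard hlS, hcard hS'L] at this
    omega
end

section
/- In the Markovian user model, sort the bidders so that a_1 ≥ a_2 ≥ … ≥ a_n, and define F(i, j) for 1 ≤ i ≤ n+1 and 1 ≤ j ≤ k+1 by F(n+1, j) = 0 for all j, F(i, k+1) = 0 for all i, and F(i, j) = max( F(i+1, j+1)·q_i + e_i , F(i+1, j) ) otherwise. Then F(1, 1) equals the maximum efficiency over all injective assignments of bidders to the k positions. -/
theorem Fin.prod_filter_lt_succ {M : Type*} [CommMonoid M] {k : ℕ} (f : Fin (k + 1) → M)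
    (j : Fin k) :
    ∏ l ∈ Finset.univ.filter (· < j.succ), f l =
      f 0 * ∏ l ∈ Finset.univ.filter (· < j), f l.succ := by
  rw [Finset.prod_filter, Finset.prod_filter, Fin.prod_univ_succ]
  simp [Fin.succ_pos, Fin.succ_lt_succ_iff]

theorem List.Nodup.exists_append_length_eq {α : Type*} [Fintype α] {L : List α} (hL : L.Nodup)
    {k : ℕ} (hLk : L.length ≤ k) (hk : k ≤ Fintype.card α) :
    ∃ M, (L ++ M).Nodup ∧ (L ++ M).length = k := by
  classical
  set R := (Finset.univ \ L.toFinset).toList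
  refine ⟨R.take (k - L.length), hL.append ((Finset.nodup_toList _).sublist (take_sublist _ _))
    fun a haL haR => ?_, ?_⟩
  · simpa [R, haL] using mem_of_mem_take haR
  · simp [R, Finset.card_sdiff, toFinset_card_of_nodup hL]
    omega

theorem List.Nodup.exists_injective_ofFn_eq {α : Type*} {L : List α} (hL : L.Nodup) {k : ℕ}
    (h : L.length = k) : ∃ x : Fin k → α, Function.Injective x ∧ List.ofFn x = L := by
  subst h
  exact ⟨L.get, nodup_iff_injective_get.mp hL, ofFn_get L⟩

noncomputable def cascadeValue {α : Type*} (e q : α → ℝ) : List α → ℝ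
  | [] => 0
  | b :: L => e b + q b * cascadeValue e q L

theorem eff_eq_cascadeValue_ofFn {n : ℕ} (e q : Fin n → ℝ) :
    ∀ {k : ℕ} (x : Fin k → Fin n), eff n e q k x = cascadeValue e q (List.ofFn x)
  | 0, x => by simp [eff, cascadeValue]
  | k + 1, x => by
    rw [List.ofFn_succ, cascadeValue, ← eff_eq_cascadeValue_ofFn e q (fun j => x j.succ), eff,
      eff, Fin.sum_univ_succ, Finset.mul_sum]
    congr 1
    · simp
    · refine Finset.sum_congr rfl fun j _ => ?_
      rw [Fin.prod_filter_lt_succ]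
      ring

namespace cascadeValue

variable {α : Type*} {e q : α → ℝ}

theorem nonneg (he : ∀ a, 0 ≤ e a) (hq : ∀ a, 0 ≤ q a) : ∀ L : List α, 0 ≤ cascadeValue e q L
  | [] => le_rfl
  | b :: L => add_nonneg (he b) (mul_nonneg (hq b) (nonneg he hq L))

theorem le_append (he : ∀ a, 0 ≤ e a) (hq : ∀ a, 0 ≤ q a) :
    ∀ L M : List α, cascadeValue e q L ≤ cascadeValue e q (L ++ M)
  | [], M => nonneg he hq M
  | b :: L, M => by
    simp only [List.cons_append, cascadeValue]
    gcongr
    · exact hq b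
    · exact le_append he hq L M

theorem le_cons_erase [DecidableEq α] (hq : ∀ a, 0 ≤ q a) {b : α} :
    ∀ {L : List α}, b ∈ L → (∀ u ∈ L, e u * (1 - q b) ≤ e b * (1 - q u)) →
      cascadeValue e q L ≤ cascadeValue e q (b :: L.erase b)
  | u :: L, hb, hmax => by
    by_cases hub : u = b
    · subst hub
      simp [cascadeValue]
    · have hbL : b ∈ L := (List.mem_cons.mp hb).resolve_left (Ne.symm hub)
      have ih := mul_le_mul_of_nonneg_left
        (le_cons_erase hq hbL fun v hv => hmax v (List.mem_cons_of_mem u hv)) (hq u)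
      have hswap := hmax u List.mem_cons_self
      rw [List.erase_cons_tail (by simpa using hub)]
      simp only [cascadeValue] at ih ⊢
      linarith

end cascadeValue

structure IsDPTable (n k : ℕ) (e q : Fin n → ℝ) (F : ℕ → ℕ → ℝ) : Prop where
  last_row : ∀ j, F (n + 1) j = 0
  last_col : ∀ i, F i (k + 1) = 0
  step : ∀ i : Fin n, ∀ j : ℕ, 1 ≤ j → j ≤ k →
    F (i.val + 1) j = max (F (i.val + 2) (j + 1) * q i + e i) (F (i.val + 2) j)

namespace IsDPTable

variable {n k : ℕ} {e q : Fin n → ℝ} {F : ℕ → ℕ → ℝ}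

theorem cascadeValue_le (hF : IsDPTable n k e q F) (hq0 : ∀ i, 0 ≤ q i) (hq1 : ∀ i, q i < 1)
    (hsorted : Antitone (fun i : Fin n => e i / (1 - q i))) {i : ℕ} (hi : i ≤ n) :
    ∀ j, 1 ≤ j → ∀ L : List (Fin n), (∀ u ∈ L, i ≤ u.val) → L.Nodup → L.length + j ≤ k + 1 →
      cascadeValue e q L ≤ F (i + 1) j := by
  induction hi using Nat.decreasingInduction with
  | self =>
    rintro j - (_ | ⟨u, L⟩) hL - -
    · simp [cascadeValue, hF.last_row]
    · exact absurd (hL u List.mem_cons_self) (by omega)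
  | of_succ i hi ih =>
    intro j hj1 L hL hnd hlen
    obtain hj | hj := Nat.lt_or_ge k j
    · obtain rfl : L = [] := List.eq_nil_of_length_eq_zero (by omega)
      simp [cascadeValue, show j = k + 1 by omega, hF.last_col]
    set b : Fin n := ⟨i, hi⟩
    rw [hF.step b j hj1 hj]
    by_cases hb : b ∈ L
    · have hmax : ∀ u ∈ L, e u * (1 - q b) ≤ e b * (1 - q u) := fun u hu =>
        (div_le_div_iff₀ (by linarith [hq1 u]) (by linarith [hq1 b])).mp
          (hsorted (show b ≤ u from hL u hu))
      have hrest := ih (j + 1) (by omega) (L.erase b)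
        (fun u hu =>
          have ⟨hub, huL⟩ := hnd.mem_erase_iff.mp hu
          Nat.lt_of_le_of_ne (hL u huL) fun h => hub (Fin.ext h.symm))
        (hnd.erase b) (by have := List.length_erase_of_mem hb; omega)
      calc cascadeValue e q L ≤ cascadeValue e q (b :: L.erase b) :=
            cascadeValue.le_cons_erase hq0 hb hmax
        _ ≤ F (i + 2) (j + 1) * q b + e b := by
            rw [cascadeValue]
            linarith [mul_le_mul_of_nonneg_left hrest (hq0 b)]
        _ ≤ _ := le_max_left _ _
    · have hrest := ih j hj1 L
        (fun u hu => Nat.lt_of_le_of_ne (hL u hu) fun h => hb ((Fin.ext h.symm : u = b) ▸ hu))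
        hnd hlen
      exact hrest.trans (le_max_right _ _)

theorem exists_le_cascadeValue (hF : IsDPTable n k e q F) (hq0 : ∀ i, 0 ≤ q i) {i : ℕ}
    (hi : i ≤ n) :
    ∀ j, 1 ≤ j → j ≤ k + 1 → ∃ L : List (Fin n), (∀ u ∈ L, i ≤ u.val) ∧ L.Nodup ∧
      L.length + j ≤ k + 1 ∧ F (i + 1) j ≤ cascadeValue e q L := by
  induction hi using Nat.decreasingInduction with
  | self =>
    exact fun j _ hj => ⟨[], by simp, List.nodup_nil, by simpa, by simp [cascadeValue, hF.last_row]⟩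
  | of_succ i hi ih =>
    intro j hj1 hjk
    obtain rfl | hj := eq_or_lt_of_le hjk
    · exact ⟨[], by simp, List.nodup_nil, by simp, by simp [cascadeValue, hF.last_col]⟩
    set b : Fin n := ⟨i, hi⟩
    rw [hF.step b j hj1 (by omega)]
    rcases le_total (F (i + 2) (j + 1) * q b + e b) (F (i + 2) j) with hskip | htake
    · obtain ⟨L, hL, hnd, hlen, hval⟩ := ih j hj1 hjk
      exact ⟨L, fun u hu => Nat.le_of_succ_le (hL u hu), hnd, hlen,
        (max_eq_right hskip).trans_le hval⟩
    · obtain ⟨L, hL, hnd, hlen, hval⟩ := ih (j + 1) (by omega) (by omega)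
      refine ⟨b :: L, ?_, List.nodup_cons.mpr ⟨fun hb => Nat.lt_irrefl i (hL b hb), hnd⟩, ?_, ?_⟩
      · exact List.forall_mem_cons.mpr ⟨le_rfl, fun u hu => Nat.le_of_succ_le (hL u hu)⟩
      · simp only [List.length_cons]; omega
      · rw [max_eq_left htake, cascadeValue]
        linarith [mul_le_mul_of_nonneg_left hval (hq0 b)]

end IsDPTable

/-- The dynamic program for the optimal assignment: with the bidders sorted in
nonincreasing order of adjusted ecpm `a_i = e_i/(1 − q_i)` (1-indexed,
bidder `i : Fin n` being the `(i+1)`-st), define `F i j` for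
`1 ≤ i ≤ n+1`, `1 ≤ j ≤ k+1` by `F (n+1) j = 0`, `F i (k+1) = 0`, and
otherwise `F i j = max (F (i+1) (j+1)·q_i + e_i) (F (i+1) j)`.  Then `F 1 1`
is the maximum efficiency over all injective assignments of bidders to the
`k` positions. -/
theorem dynamic_program_computes_optimum (n k : ℕ) (hk : k ≤ n)
    (e q : Fin n → ℝ) (he : ∀ i, 0 ≤ e i)
    (hq0 : ∀ i, 0 ≤ q i) (hq1 : ∀ i, q i < 1)
    (hsorted : Antitone (fun i : Fin n => e i / (1 - q i)))
    (F : ℕ → ℕ → ℝ)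
    (hFn : ∀ j, F (n + 1) j = 0)
    (hFk : ∀ i, F i (k + 1) = 0)
    (hF : ∀ i : Fin n, ∀ j : ℕ, 1 ≤ j → j ≤ k →
      F (i.val + 1) j =
        max (F (i.val + 2) (j + 1) * q i + e i) (F (i.val + 2) j)) :
    IsGreatest {r : ℝ | ∃ x : Fin k → Fin n,
      Function.Injective x ∧ r = eff n e q k x} (F 1 1) := by
  have hT : IsDPTable n k e q F := ⟨hFn, hFk, hF⟩
  have upper (x : Fin k → Fin n) (hx : Function.Injective x) : eff n e q k x ≤ F 1 1 := by
    rw [eff_eq_cascadeValue_ofFn]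
    exact hT.cascadeValue_le hq0 hq1 hsorted (Nat.zero_le n) 1 le_rfl _
      (fun _ _ => Nat.zero_le _) (List.nodup_ofFn.mpr hx) (by simp)
  obtain ⟨L, -, hL, hlen, hval⟩ := hT.exists_le_cascadeValue hq0 (Nat.zero_le n) 1 le_rfl (by omega)
  obtain ⟨M, hLM, hlenLM⟩ := hL.exists_append_length_eq (k := k) (by omega) (by simpa using hk)
  obtain ⟨x, hx, hxLM⟩ := hLM.exists_injective_ofFn_eq hlenLM
  refine ⟨⟨x, hx, le_antisymm ?_ (upper x hx)⟩, ?_⟩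
  · rw [eff_eq_cascadeValue_ofFn, hxLM]
    exact hval.trans (cascadeValue.le_append he hq0 L M)
  · rintro r ⟨y, hy, rfl⟩
    exact upper y hy
end

section
/- In the single-slot, budgets-only proportional-sharing mechanism, truthfully declaring one's budget is a weakly dominant strategy: for every bidder i with true budget B_i > 0 and every fixed declared budgets of the other bidders, the utility of bidder i from declaring B'_i = B_i is at least her utility from declaring any other B'_i > 0. In particular, declaring B'_i > B_i yields utility −∞, and declaring B'_i = B_i − Δ for any Δ > 0 yields strictly fewer clicks, since D·(B_i − Δ)/(𝓑 − Δ) < D·B_i/𝓑 when n > 1 and all declared budgets are positive. -/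
/-!
The single-slot, budgets-only proportional-sharing mechanism: `n > 1` bidders
with true budgets `B i > 0` and a single slot with `D > 0` clicks.  Given
declared budgets `decl` with total `𝓑' = Σ_j decl j`, bidder `i` receives
`(decl i / 𝓑') · D` clicks at the common per-click price `𝓑'/D`, spending
exactly `decl i`.  Her (click-maximizing) utility is her clicks if her total
payment is within her true budget, and `−∞` otherwise.
-/

/-- Clicks allocated to bidder `i` under proportional sharing. -/
noncomputable def propClicks (n : ℕ) (D : ℝ) (decl : Fin n → ℝ) (i : Fin n) : ℝ :=
  (decl i / ∑ j, decl j) * D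

/-- Click-maximizing utility of bidder `i` with true budget `Btrue`: her
clicks if her payment (her declared budget) is at most `Btrue`, else `−∞`. -/
noncomputable def propUtil (n : ℕ) (D : ℝ) (Btrue : ℝ) (decl : Fin n → ℝ)
    (i : Fin n) : EReal :=
  if decl i ≤ Btrue then (propClicks n D decl i : EReal) else ⊥

/-- Proportional sharing is truthful: declaring the true budget weakly
dominates any other positive declaration; overdeclaring gives utility `−∞`,
and underdeclaring by `Δ > 0` gives strictly fewer clicks, since
`D·(B_i − Δ)/(𝓑 − Δ) < D·B_i/𝓑` when `n > 1` and all budgets are positive. -/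
theorem proportional_sharing_truthful (n : ℕ) (hn : 1 < n) (D : ℝ) (hD : 0 < D)
    (B : Fin n → ℝ) (hB : ∀ j, 0 < B j)
    (i : Fin n) (decl : Fin n → ℝ) (hdecl : ∀ j, 0 < decl j) :
    (∀ B' : ℝ, 0 < B' →
      propUtil n D (B i) (Function.update decl i B') i ≤
        propUtil n D (B i) (Function.update decl i (B i)) i) ∧
    (∀ B' : ℝ, B i < B' →
      propUtil n D (B i) (Function.update decl i B') i = ⊥) ∧
    (∀ Δ : ℝ, 0 < Δ → Δ < B i →
      propClicks n D (Function.update decl i (B i - Δ)) i <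
        propClicks n D (Function.update decl i (B i)) i ∧
      propClicks n D (Function.update decl i (B i - Δ)) i =
        D * (B i - Δ) / ((∑ j, Function.update decl i (B i) j) - Δ) ∧
      propClicks n D (Function.update decl i (B i)) i =
        D * B i / (∑ j, Function.update decl i (B i) j)) := by
  classical
  set S : ℝ := ∑ j ∈ Finset.univ.erase i, decl j with hSdef
  have hSpos : 0 < S := by
    apply Finset.sum_pos (fun j _ => hdecl j)
    obtain ⟨j, hj⟩ := Fintype.exists_ne_of_one_lt_card (by simpa using hn) i
    exact ⟨j, Finset.mem_erase.mpr ⟨hj, Finset.mem_univ j⟩⟩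
  have hsum : ∀ x : ℝ, (∑ j, Function.update decl i x j) = x + S := by
    intro x
    rw [Finset.sum_update_of_mem (Finset.mem_univ i), Finset.sdiff_singleton_eq_erase]
  have hclick : ∀ x : ℝ, propClicks n D (Function.update decl i x) i
      = x / (x + S) * D := by
    intro x
    simp [propClicks, hsum, Function.update_self]
  have hmono : ∀ x y : ℝ, 0 < x → x < y →
      x / (x + S) * D < y / (y + S) * D := by
    intro x y hx hxy
    have hxS : 0 < x + S := by linarith
    have hyS : 0 < y + S := by linarith
    apply mul_lt_mul_of_pos_right _ hD
    rw [div_lt_div_iff₀ hxS hyS]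
    nlinarith
  refine ⟨?_, ?_, ?_⟩
  · intro B' hB'
    by_cases h : B' ≤ B i
    · rw [propUtil, propUtil, if_pos (by simp [h]), if_pos (by simp)]
      norm_cast
      rw [hclick, hclick]
      rcases eq_or_lt_of_le h with h | h
      · rw [h]
      · exact le_of_lt (hmono B' (B i) hB' h)
    · rw [propUtil, if_neg (by simpa using h)]
      exact bot_le
  · intro B' hB'
    rw [propUtil, if_neg (by simpa using not_le.mpr hB')]
  · intro Δ hΔ hΔB
    have hBi := hB i
    have h1 : 0 < B i - Δ := by linarith
    refine ⟨?_, ?_, ?_⟩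
    · rw [hclick, hclick]
      exact hmono _ _ h1 (by linarith)
    · rw [hclick, hsum, show B i + S - Δ = (B i - Δ) + S by ring,
        div_mul_eq_mul_div, mul_comm]
    · rw [hclick, hsum, div_mul_eq_mul_div, mul_comm]
end
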